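/- arXiv:2007.04759 — 6 statements merged into one kernel-verified Lean document; each statement's English description precedes it below -/
import Mathlib

section
/- Let g : [0,1] → [0,1] be the hat function g(x) = min{2x, 2-2x}, and define g_1 = g and g_{m+1} = g ∘ g_m. Then for all x ∈ [0,1], x² = x - ∑_{m=1}^∞ g_m(x)/2^{2m}, i.e., the partial sums f_n(x) = x - ∑_{m=1}^n g_m(x)/2^{2m} converge to x² as n → ∞. -/
/-- The tent (hat) function `g(x) = min (2x) (2 - 2x)`. -/
noncomputable def tent : ℝ → ℝ := fun x => min (2 * x) (2 - 2 * x)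

/-! With `q y = y - y²` one has `4 q y = 2y + q (2y)` and `q (1 - y) = q y`, hence
`q y = tent y / 4 + q (tent y) / 4` for every real `y`. Iterating gives
`x - ∑_{m=1}^n tent^[m] x / 4^m = x² + q (tent^[n] x) / 4^n`, and the error term is at most `4^{-n}`
because `tent` maps `[0,1]` into itself and `0 ≤ q ≤ 1` there. -/

open Finset Filter Topology

theorem tent_mapsTo_Icc : Set.MapsTo tent (Set.Icc 0 1) (Set.Icc 0 1) := by
  rintro x ⟨hx₀, hx₁⟩
  simp only [tent, Set.mem_Icc, le_min_iff, min_le_iff]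
  exact ⟨⟨by linarith, by linarith⟩,
    (le_total x (1 / 2)).imp (fun _ => by linarith) (fun _ => by linarith)⟩

theorem sub_sq_eq_tent (y : ℝ) : y - y ^ 2 = tent y / 4 + (tent y - tent y ^ 2) / 4 := by
  rcases min_choice (2 * y) (2 - 2 * y) with h | h <;> rw [tent, h] <;> ring

theorem sub_sum_iterate_tent (x : ℝ) (n : ℕ) :
    x - ∑ m ∈ Icc 1 n, tent^[m] x / 2 ^ (2 * m) =
      x ^ 2 + (tent^[n] x - (tent^[n] x) ^ 2) / 4 ^ n := by
  induction n with
  | zero => simp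
  | succ n ih =>
    rw [sum_Icc_succ_top (by omega), Function.iterate_succ_apply', sub_add_eq_sub_sub, ih,
      add_sub_assoc, add_right_inj, sub_sq_eq_tent (tent^[n] x), pow_mul, pow_succ]
    field_simp
    ring

theorem tendsto_div_four_pow_of_mem_Icc {y : ℕ → ℝ} (hy : ∀ n, y n ∈ Set.Icc 0 1) :
    Tendsto (fun n => (y n - y n ^ 2) / 4 ^ n) atTop (𝓝 0) := by
  have hgeom : Tendsto (fun n : ℕ => (1 / 4 : ℝ) ^ n) atTop (𝓝 0) :=
    tendsto_pow_atTop_nhds_zero_of_lt_one (by norm_num) (by norm_num)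
  refine squeeze_zero (fun n => ?_) (fun n => ?_) hgeom
  · obtain ⟨h₀, h₁⟩ := hy n
    exact div_nonneg (by nlinarith) (by positivity)
  · obtain ⟨h₀, h₁⟩ := hy n
    rw [one_div_pow]
    exact div_le_div_of_nonneg_right (by nlinarith) (by positivity)

/-- On `[0,1]`, the partial sums `f_n(x) = x - ∑_{m=1}^n g_m(x)/2^{2m}` of the
telescoping series built from the iterated tent maps `g_m = g∘⋯∘g` converge to `x²`. -/
theorem stmt_0 (x : ℝ) (hx : x ∈ Set.Icc (0 : ℝ) 1) :
    Filter.Tendsto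
      (fun n : ℕ => x - ∑ m ∈ Finset.Icc 1 n, tent^[m] x / 2 ^ (2 * m))
      Filter.atTop (nhds (x ^ 2)) := by
  simp_rw [sub_sum_iterate_tent]
  simpa using tendsto_const_nhds.add
    (tendsto_div_four_pow_of_mem_Icc fun n => tent_mapsTo_Icc.iterate n hx)
end

section
/- Let σ : ℝ → ℝ be continuous and discriminatory with respect to a compact set K ⊆ ℝ^d, meaning: for every finite signed regular Borel measure μ on K, if ∫_K σ(w·x + b) dμ(x) = 0 for all w ∈ ℝ^d and b ∈ ℝ, then μ = 0. Then the set of functions x ↦ ∑_{i=1}^N c_i σ(w_i·x + b_i) (over all N ∈ ℕ, c_i, b_i ∈ ℝ, w_i ∈ ℝ^d) is dense in C(K) with the supremum norm. -/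
/-!
Suppose the ridge functions `x ↦ σ(⟪w, x⟫ + b)` did not span a dense subspace of `C(K)`. By
Hahn–Banach some nonzero continuous functional `l` vanishes on all of them. Splitting `l` as a
difference of two positive functionals and applying the Riesz–Markov–Kakutani theorem to each,
`l f = ∫ f dμ - ∫ f dν` for finite regular measures `μ`, `ν`. These two measures integrate every
ridge function alike, so `μ = ν` since `σ` is discriminatory, whence `l = 0`.
-/

open MeasureTheory CompactlySupported

theorem Submodule.exists_fin_sum_of_mem_span_range {R M ι : Type*} [Semiring R]
    [AddCommMonoid M] [Module R M] {v : ι → M} {x : M} (hx : x ∈ span R (Set.range v)) :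
    ∃ (N : ℕ) (c : Fin N → R) (i : Fin N → ι), ∑ k, c k • v (i k) = x := by
  obtain ⟨N, c, g, rfl⟩ := mem_span_set'.1 hx
  choose i hi using fun k => (g k).2
  exact ⟨N, c, i, by simp only [hi]⟩

theorem Submodule.dense_of_forall_dual_eq_zero {E : Type*} [AddCommGroup E] [Module ℝ E]
    [TopologicalSpace E] [IsTopologicalAddGroup E] [ContinuousSMul ℝ E] [LocallyConvexSpace ℝ E]
    (M : Submodule ℝ E) (h : ∀ l : E →L[ℝ] ℝ, (∀ x ∈ M, l x = 0) → l = 0) :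
    Dense (M : Set E) := by
  by_contra hM
  obtain ⟨f, hf⟩ := not_forall.mp hM
  obtain ⟨l, u, hlu, hfu⟩ := geometric_hahn_banach_closed_point
    M.topologicalClosure.convex M.isClosed_topologicalClosure hf
  have hl : ∀ x ∈ M, l x = 0 := fun x hx => by
    by_contra hne
    have := hlu (((u + 1) / l x) • x) (M.le_topologicalClosure (M.smul_mem _ hx))
    rw [map_smul, smul_eq_mul, div_mul_cancel₀ _ hne] at this
    linarith
  have hu : 0 < u := by simpa using hlu 0 M.topologicalClosure.zero_mem
  simp only [h l hl, zero_apply] at hfu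
  linarith

namespace ContinuousMap

variable {X : Type*} [TopologicalSpace X]

lemma posPart_apply (a : C(X, ℝ)) (x : X) : a⁺ x = (a x)⁺ := rfl

lemma posPart_smul_of_nonneg {c : ℝ} (hc : 0 ≤ c) (a : C(X, ℝ)) : (c • a)⁺ = c • a⁺ := by
  ext x
  simp [posPart_def, mul_max_of_nonneg _ _ hc]

variable [CompactSpace X]

lemma norm_posPart_add_le (a b : C(X, ℝ)) : ‖(a + b)⁺‖ ≤ ‖a⁺‖ + ‖b⁺‖ := by
  refine (norm_le _ (by positivity)).2 fun x => ?_
  have ha := a⁺.norm_coe_le_norm x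
  have hb := b⁺.norm_coe_le_norm x
  simp only [posPart_apply, Real.norm_eq_abs, add_apply, abs_of_nonneg (posPart_nonneg _)] at *
  exact (sup_le (add_le_add (le_posPart _) (le_posPart _))
    (add_nonneg (posPart_nonneg _) (posPart_nonneg _))).trans (add_le_add ha hb)

lemma norm_le_norm_posPart_add_norm_negPart (a : C(X, ℝ)) : ‖a‖ ≤ ‖a⁺‖ + ‖a⁻‖ := by
  simpa only [posPart_sub_negPart] using norm_sub_le a⁺ a⁻

/- Hahn–Banach on `C(X) × C(X)`: extend `(a, -a) ↦ l a` below the sublinear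
`N (a, b) = ‖l‖ (‖a⁺‖ + ‖b⁺‖)`, which vanishes on the negative cone; the two halves of the
extension are then positive. -/
theorem exists_positiveLinearMap_sub_eq (l : C(X, ℝ) →L[ℝ] ℝ) :
    ∃ Λ₁ Λ₂ : C(X, ℝ) →ₚ[ℝ] ℝ, ∀ f, Λ₁ f - Λ₂ f = l f := by
  let N : C(X, ℝ) × C(X, ℝ) → ℝ := fun p => ‖l‖ * (‖p.1⁺‖ + ‖p.2⁺‖)
  let f : C(X, ℝ) × C(X, ℝ) →ₗ.[ℝ] ℝ :=
    ((l : C(X, ℝ) →ₗ[ℝ] ℝ) ∘ₗ LinearMap.fst ℝ C(X, ℝ) C(X, ℝ)).toPMap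
      (LinearMap.ker (LinearMap.fst ℝ C(X, ℝ) C(X, ℝ) + LinearMap.snd ℝ C(X, ℝ) C(X, ℝ)))
  have N_hom : ∀ c : ℝ, 0 < c → ∀ p, N (c • p) = c * N p := fun c hc p => by
    simp only [N, Prod.smul_fst, Prod.smul_snd, posPart_smul_of_nonneg hc.le, norm_smul,
      Real.norm_of_nonneg hc.le]
    ring
  have N_add : ∀ p q, N (p + q) ≤ N p + N q := fun p q => by
    have h1 := norm_posPart_add_le p.1 q.1
    have h2 := norm_posPart_add_le p.2 q.2
    simp only [N, Prod.fst_add, Prod.snd_add]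
    nlinarith [norm_nonneg l]
  have f_le : ∀ p : f.domain, f p ≤ N p := fun ⟨p, hp⟩ => by
    change l p.1 ≤ ‖l‖ * (‖p.1⁺‖ + ‖p.2⁺‖)
    have hp2 : p.2 = -p.1 := eq_neg_of_add_eq_zero_right hp
    rw [hp2, posPart_neg]
    calc l p.1 ≤ ‖l‖ * ‖p.1‖ := (le_abs_self _).trans (l.le_opNorm _)
      _ ≤ _ := mul_le_mul_of_nonneg_left (norm_le_norm_posPart_add_norm_negPart _) (norm_nonneg l)
  obtain ⟨G, hGf, hGN⟩ := exists_extension_of_le_sublinear f N N_hom N_add f_le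
  have hG : ∀ p : C(X, ℝ) × C(X, ℝ), p ≤ 0 → G p ≤ 0 := fun p hp => by
    simpa [N, posPart_eq_zero.mpr hp.1, posPart_eq_zero.mpr hp.2] using hGN p
  refine ⟨.mk₀ (G ∘ₗ LinearMap.inl ℝ C(X, ℝ) C(X, ℝ)) fun a ha => ?_,
    .mk₀ (G ∘ₗ LinearMap.inr ℝ C(X, ℝ) C(X, ℝ)) fun a ha => ?_, fun a => ?_⟩
  · exact neg_nonpos.1 <| (map_neg G _).symm.trans_le <|
      hG (-(a, 0)) (Prod.mk_le_mk.2 ⟨neg_nonpos.2 ha, neg_zero.le⟩)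
  · exact neg_nonpos.1 <| (map_neg G _).symm.trans_le <|
      hG (-(0, a)) (Prod.mk_le_mk.2 ⟨neg_zero.le, neg_nonpos.2 ha⟩)
  · have hGl : G (a, -a) = l a := hGf ⟨(a, -a), LinearMap.mem_ker.2 (add_neg_cancel a)⟩
    change G (a, 0) - G (0, a) = l a
    rw [← hGl, ← map_sub, Prod.mk_sub_mk, sub_zero, zero_sub]

variable [T2Space X] [MeasurableSpace X] [BorelSpace X]

theorem exists_regular_integral_eq (Λ : C(X, ℝ) →ₚ[ℝ] ℝ) :
    ∃ μ : Measure X, μ.Regular ∧ IsFiniteMeasure μ ∧ ∀ f, Λ f = ∫ x, f x ∂μ := by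
  let Λc : C_c(X, ℝ) →ₚ[ℝ] ℝ := .mk₀
    { toFun g := Λ g.toContinuousMap
      map_add' g h := map_add Λ _ _
      map_smul' c g := map_smul Λ c _ }
    fun g hg => Λ.map_nonneg fun x => hg x
  exact ⟨RealRMK.rieszMeasure Λc, inferInstance, inferInstance, fun f =>
    (RealRMK.integral_rieszMeasure Λc (CompactlySupportedContinuousMap.continuousMapEquiv f)).symm⟩

theorem exists_regular_integral_sub_eq (l : C(X, ℝ) →L[ℝ] ℝ) :
    ∃ μ ν : Measure X, μ.Regular ∧ ν.Regular ∧ IsFiniteMeasure μ ∧ IsFiniteMeasure ν ∧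
      ∀ f, l f = ∫ x, f x ∂μ - ∫ x, f x ∂ν := by
  obtain ⟨Λ₁, Λ₂, hl⟩ := exists_positiveLinearMap_sub_eq l
  obtain ⟨μ, hμ, hμfin, hΛ₁⟩ := exists_regular_integral_eq Λ₁
  obtain ⟨ν, hν, hνfin, hΛ₂⟩ := exists_regular_integral_eq Λ₂
  exact ⟨μ, ν, hμ, hν, hμfin, hνfin, fun f => by rw [← hl, hΛ₁, hΛ₂]⟩

end ContinuousMap

def ridge {E : Type*} [NormedAddCommGroup E] [InnerProductSpace ℝ E]
    (σ : C(ℝ, ℝ)) (w : E) (b : ℝ) : C(E, ℝ) :=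
  σ.comp ⟨fun x => inner ℝ w x + b, by fun_prop⟩

/-- Cybenko's universal approximation theorem: if `σ` is continuous and discriminatory
with respect to a compact set `K ⊆ ℝ^d` (encoded: any two finite regular Borel measures
on `K` giving equal integrals to all functions `x ↦ σ(w·x + b)` coincide, i.e. every
finite signed regular Borel measure annihilating all such functions is zero), then the
shallow networks `x ↦ ∑ᵢ cᵢ σ(wᵢ·x + bᵢ)` are dense in `C(K)`. -/
theorem stmt_5 (d : ℕ) (K : Set (EuclideanSpace ℝ (Fin d))) (hK : IsCompact K)
    (σ : ℝ → ℝ) (hσ : Continuous σ)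
    (hdisc : ∀ (μ ν : Measure K), IsFiniteMeasure μ → IsFiniteMeasure ν →
      μ.Regular → ν.Regular →
      (∀ (w : EuclideanSpace ℝ (Fin d)) (b : ℝ),
        ∫ x : K, σ ((inner ℝ w (x : EuclideanSpace ℝ (Fin d)) : ℝ) + b) ∂μ =
        ∫ x : K, σ ((inner ℝ w (x : EuclideanSpace ℝ (Fin d)) : ℝ) + b) ∂ν) →
      μ = ν) :
    Dense {f : C(K, ℝ) | ∃ (N : ℕ) (c b : Fin N → ℝ)
        (w : Fin N → EuclideanSpace ℝ (Fin d)),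
      ∀ x : K, f x = ∑ i, c i * σ ((inner ℝ (w i) (x : EuclideanSpace ℝ (Fin d)) : ℝ) + b i)} := by
  have : CompactSpace K := isCompact_iff_compactSpace.mp hK
  let ridgeK : EuclideanSpace ℝ (Fin d) × ℝ → C(K, ℝ) := fun p => (ridge ⟨σ, hσ⟩ p.1 p.2).restrict K
  refine (Submodule.dense_of_forall_dual_eq_zero (Submodule.span ℝ (Set.range ridgeK))
    fun l hl => ?_).mono fun f hf => ?_
  · obtain ⟨μ, ν, hμ, hν, hμfin, hνfin, hlμν⟩ := ContinuousMap.exists_regular_integral_sub_eq l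
    have hμν : μ = ν := hdisc μ ν hμfin hνfin hμ hν fun w b => by
      have := hl (ridgeK (w, b)) (Submodule.subset_span ⟨_, rfl⟩)
      rwa [hlμν, sub_eq_zero] at this
    ext f
    simp [hlμν, hμν]
  · obtain ⟨N, c, p, rfl⟩ := Submodule.exists_fin_sum_of_mem_span_range hf
    exact ⟨N, c, fun k => (p k).2, fun k => (p k).1, fun x => by simp [ridgeK, ridge]⟩
end

section
/- Every continuous sigmoidal function σ : ℝ → ℝ (i.e., σ(t) → 1 as t → ∞ and σ(t) → 0 as t → -∞) is discriminatory with respect to any compact set K ⊆ ℝ^d: if μ is a finite signed regular Borel measure on K with ∫_K σ(w·x + b) dμ(x) = 0 for all w ∈ ℝ^d, b ∈ ℝ, then μ = 0. -/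
/-!
The steep ridges `x ↦ σ (n * (t - x) + c)` converge boundedly, as `n → ∞`, to `1` on `x < t`,
to `σ c` at `x = t` and to `0` on `x > t`. By dominated convergence the hypothesis therefore fixes
`ρ (Iio t) + σ c * ρ {t}` for every `c`, and letting `c → ∞` fixes `ρ (Iic t)`: a finite measure on
`ℝ` is determined by its integrals against `x ↦ σ (a * x + b)`. Applied to the image of `μ` and
`ν` under `x ↦ ⟪w, x⟫`, this shows that all one-dimensional projections of the two measures agree,
so they agree on `ℝ^d` by uniqueness of characteristic functions (Cramér–Wold), hence on `K`.
-/

open MeasureTheory Filter Set Topology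

section Sigmoidal

variable {σ : ℝ → ℝ}

lemma Continuous.exists_norm_le_of_tendsto_atTop_atBot (hσ : Continuous σ) {a b : ℝ}
    (h1 : Tendsto σ atTop (𝓝 a)) (h0 : Tendsto σ atBot (𝓝 b)) : ∃ M, ∀ t, ‖σ t‖ ≤ M := by
  obtain ⟨M, hM⟩ := isBounded_iff_forall_norm_le.1 <|
    hσ.isBounded_range_iff_isBigO_atTop_atBot.2 ⟨h1.isBigO_one ℝ, h0.isBigO_one ℝ⟩
  exact ⟨M, fun t ↦ hM _ (mem_range_self t)⟩

lemma tendsto_sigmoid_steep (h1 : Tendsto σ atTop (𝓝 1)) (h0 : Tendsto σ atBot (𝓝 0))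
    (t c x : ℝ) :
    Tendsto (fun n : ℕ ↦ σ (n * (t - x) + c)) atTop
      (𝓝 ((Iio t).indicator (fun _ ↦ 1) x + ({t} : Set ℝ).indicator (fun _ ↦ σ c) x)) := by
  rcases lt_trichotomy x t with hx | rfl | hx
  · rw [indicator_of_mem (mem_Iio.2 hx), indicator_of_notMem (mem_singleton_iff.not.2 hx.ne),
      add_zero]
    exact h1.comp <| tendsto_atTop_add_const_right _ c <|
      tendsto_natCast_atTop_atTop.atTop_mul_const (sub_pos.2 hx)
  · simp
  · rw [indicator_of_notMem (notMem_Iio.2 hx.le),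
      indicator_of_notMem (mem_singleton_iff.not.2 hx.ne'), zero_add]
    exact h0.comp <| tendsto_atBot_add_const_right _ c <|
      tendsto_natCast_atTop_atTop.atTop_mul_const_of_neg (sub_neg.2 hx)

lemma tendsto_integral_sigmoid_steep (hσ : Continuous σ) (h1 : Tendsto σ atTop (𝓝 1))
    (h0 : Tendsto σ atBot (𝓝 0)) (ρ : Measure ℝ) [IsFiniteMeasure ρ] (t c : ℝ) :
    Tendsto (fun n : ℕ ↦ ∫ x, σ (n * (t - x) + c) ∂ρ) atTop
      (𝓝 (ρ.real (Iio t) + σ c * ρ.real {t})) := by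
  obtain ⟨M, hM⟩ := hσ.exists_norm_le_of_tendsto_atTop_atBot h1 h0
  have hlim := tendsto_integral_of_dominated_convergence (μ := ρ) (fun _ ↦ M)
    (fun n ↦ (by fun_prop : Continuous fun x : ℝ ↦ σ (n * (t - x) + c)).aestronglyMeasurable)
    (integrable_const M) (fun n ↦ ae_of_all _ fun x ↦ hM _)
    (ae_of_all _ (tendsto_sigmoid_steep h1 h0 t c))
  rwa [integral_add ((integrable_const _).indicator measurableSet_Iio)
    ((integrable_const _).indicator (measurableSet_singleton t)),
    integral_indicator_const _ measurableSet_Iio,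
    integral_indicator_const _ (measurableSet_singleton t), smul_eq_mul, smul_eq_mul, mul_one,
    mul_comm] at hlim

end Sigmoidal

namespace MeasureTheory.Measure

theorem ext_of_integral_sigmoid_eq {σ : ℝ → ℝ} (hσ : Continuous σ) (h1 : Tendsto σ atTop (𝓝 1))
    (h0 : Tendsto σ atBot (𝓝 0)) {ρ₁ ρ₂ : Measure ℝ} [IsFiniteMeasure ρ₁] [IsFiniteMeasure ρ₂]
    (h : ∀ a b, ∫ x, σ (a * x + b) ∂ρ₁ = ∫ x, σ (a * x + b) ∂ρ₂) : ρ₁ = ρ₂ := by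
  have hsteep (t c : ℝ) :
      ρ₁.real (Iio t) + σ c * ρ₁.real {t} = ρ₂.real (Iio t) + σ c * ρ₂.real {t} := by
    refine tendsto_nhds_unique (tendsto_integral_sigmoid_steep hσ h1 h0 ρ₁ t c) ?_
    convert tendsto_integral_sigmoid_steep hσ h1 h0 ρ₂ t c using 2 with n
    convert h (-n) (n * t + c) using 3 <;> ring_nf
  have hIic (ρ : Measure ℝ) [IsFiniteMeasure ρ] (t : ℝ) :
      ρ.real (Iic t) = ρ.real (Iio t) + ρ.real {t} := by
    rw [← Iio_union_right, measureReal_union (by simp) (measurableSet_singleton t)]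
  refine Measure.ext_of_Iic ρ₁ ρ₂ fun t ↦ (measureReal_eq_measureReal_iff).1 ?_
  rw [hIic, hIic, ← one_mul (ρ₁.real {t}), ← one_mul (ρ₂.real {t})]
  refine tendsto_nhds_unique ((h1.mul_const _).const_add _) ?_
  simpa only [hsteep] using (h1.mul_const (ρ₂.real {t})).const_add (ρ₂.real (Iio t))

theorem ext_of_map_inner {E : Type*} [NormedAddCommGroup E] [InnerProductSpace ℝ E]
    [CompleteSpace E] [SecondCountableTopology E] [MeasurableSpace E] [BorelSpace E]
    {μ ν : Measure E} [IsFiniteMeasure μ] [IsFiniteMeasure ν]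
    (h : ∀ w : E, μ.map (fun x ↦ inner ℝ w x) = ν.map (fun x ↦ inner ℝ w x)) : μ = ν := by
  refine Measure.ext_of_charFun (funext fun w ↦ ?_)
  have hmap (ρ : Measure E) : charFun ρ w = charFun (ρ.map fun x ↦ inner ℝ w x) 1 := by
    rw [charFun_eq_charFunDual_toDualMap, charFunDual_eq_charFun_map_one]
    rfl
  rw [hmap, hmap, h w]

theorem map_subtype_val_injective {α : Type*} [MeasurableSpace α] {s : Set α} :
    Function.Injective (Measure.map ((↑) : s → α)) := by
  intro μ ν h
  ext _ ⟨t, ht, rfl⟩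
  rw [← Measure.map_apply measurable_subtype_coe ht, h, Measure.map_apply measurable_subtype_coe ht]

end MeasureTheory.Measure

theorem stmt_6_general (d : ℕ) (K : Set (EuclideanSpace ℝ (Fin d)))
    (σ : ℝ → ℝ) (hσ : Continuous σ)
    (h1 : Tendsto σ atTop (nhds 1)) (h0 : Tendsto σ atBot (nhds 0))
    (μ ν : Measure K) (hμ : IsFiniteMeasure μ) (hν : IsFiniteMeasure ν)
    (hint : ∀ (w : EuclideanSpace ℝ (Fin d)) (b : ℝ),
      ∫ x : K, σ ((inner ℝ w (x : EuclideanSpace ℝ (Fin d)) : ℝ) + b) ∂μ =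
      ∫ x : K, σ ((inner ℝ w (x : EuclideanSpace ℝ (Fin d)) : ℝ) + b) ∂ν) :
    μ = ν := by
  refine Measure.map_subtype_val_injective (Measure.ext_of_map_inner fun w ↦ ?_)
  rw [Measure.map_map (by fun_prop) measurable_subtype_coe,
    Measure.map_map (by fun_prop) measurable_subtype_coe]
  refine Measure.ext_of_integral_sigmoid_eq hσ h1 h0 fun a b ↦ ?_
  rw [integral_map (by fun_prop) (by fun_prop), integral_map (by fun_prop) (by fun_prop)]
  simpa only [Function.comp_apply, real_inner_smul_left] using hint (a • w) b

/-- Every continuous sigmoidal function (`σ(t) → 1` as `t → ∞`, `σ(t) → 0` as `t → -∞`)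
is discriminatory with respect to any compact `K ⊆ ℝ^d`: if a finite signed regular
Borel measure on `K` (encoded as a difference `μ - ν` of finite regular measures)
annihilates all functions `x ↦ σ(w·x + b)`, then it is zero (i.e. `μ = ν`). -/
theorem stmt_6 (d : ℕ) (K : Set (EuclideanSpace ℝ (Fin d))) (hK : IsCompact K)
    (σ : ℝ → ℝ) (hσ : Continuous σ)
    (h1 : Tendsto σ atTop (nhds 1)) (h0 : Tendsto σ atBot (nhds 0))
    (μ ν : Measure K) (hμ : IsFiniteMeasure μ) (hν : IsFiniteMeasure ν)
    (hμr : μ.Regular) (hνr : ν.Regular)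
    (hint : ∀ (w : EuclideanSpace ℝ (Fin d)) (b : ℝ),
      ∫ x : K, σ ((inner ℝ w (x : EuclideanSpace ℝ (Fin d)) : ℝ) + b) ∂μ =
      ∫ x : K, σ ((inner ℝ w (x : EuclideanSpace ℝ (Fin d)) : ℝ) + b) ∂ν) :
    μ = ν :=
  stmt_6_general d K σ hσ h1 h0 μ ν hμ hν hint
end

section
/- Let σ ∈ C^∞(ℝ) be such that for every k ∈ ℕ₀ there exists b_k ∈ ℝ with σ^{(k)}(b_k) ≠ 0. Then for every k ∈ ℕ₀, the monomial x ↦ x^k lies in the closure (with respect to uniform convergence on compact subsets of ℝ) of the span of functions {x ↦ σ(wx + b) : w, b ∈ ℝ}. -/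
/-!
The `k`-th forward difference `Δ_h^k` of `w ↦ σ(w x + b)` at `w = 0` is a linear combination of
the ridge functions `x ↦ σ(i h x + b)`, `i ≤ k`. By the mean value theorem it equals
`h^k x^k σ^{(k)}(ξ x + b)` for some `ξ ∈ [0, k h]`, so after dividing by `h^k σ^{(k)}(b)` it
converges to `x^k` uniformly for bounded `x` as `h → 0`, by continuity of `σ^{(k)}` at `b`.
-/

open Set Filter Topology
open scoped fwdDiff

section

variable {𝕜 F : Type*} [NontriviallyNormedField 𝕜] [NormedAddCommGroup F] [NormedSpace 𝕜 F]

lemma ContDiff.fwdDiff {n : WithTop ℕ∞} {f : 𝕜 → F} (hf : ContDiff 𝕜 n f) (h : 𝕜) :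
    ContDiff 𝕜 n (Δ_[h] f) :=
  (hf.comp (contDiff_id.add contDiff_const)).sub hf

lemma iteratedDeriv_fwdDiff {n : ℕ} {f : 𝕜 → F} (hf : ContDiff 𝕜 n f) (h : 𝕜) :
    iteratedDeriv n (Δ_[h] f) = Δ_[h] (iteratedDeriv n f) := by
  funext y
  have hshift : ContDiff 𝕜 n (fun z => f (z + h)) := hf.comp (contDiff_id.add contDiff_const)
  change iteratedDeriv n (fun z => f (z + h) - f z) y = _
  rw [iteratedDeriv_fun_sub hshift.contDiffAt hf.contDiffAt, iteratedDeriv_comp_add_const]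
  rfl

lemma iteratedDeriv_comp_mul_add_const {n : ℕ} {f : 𝕜 → 𝕜} (hf : ContDiff 𝕜 n f) (x b w : 𝕜) :
    iteratedDeriv n (fun w => f (w * x + b)) w = x ^ n * iteratedDeriv n f (w * x + b) := by
  have hshift : ContDiff 𝕜 n (fun u => f (u + b)) := hf.comp (contDiff_id.add contDiff_const)
  simp_rw [mul_comm _ x]
  rw [iteratedDeriv_comp_const_mul hshift x, iteratedDeriv_comp_add_const]

end

lemma fwdDiff_iterate_eq_sum_fin {R : Type*} [CommRing R] (f : R → R) (h y : R) (n : ℕ) :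
    (Δ_[h])^[n] f y = ∑ i : Fin (n + 1), (-1) ^ (n - (i : ℕ)) * n.choose i * f (y + i * h) := by
  rw [fwdDiff_iter_eq_sum_shift, ← Fin.sum_univ_eq_sum_range]
  simp [zsmul_eq_mul, nsmul_eq_mul]

theorem exists_fwdDiff_iterate_eq_pow_mul_iteratedDeriv {n : ℕ} {f : ℝ → ℝ}
    (hf : ContDiff ℝ n f) {h : ℝ} (hh : 0 < h) (y : ℝ) :
    ∃ ξ ∈ Icc y (y + n * h), (Δ_[h])^[n] f y = h ^ n * iteratedDeriv n f ξ := by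
  induction n generalizing f with
  | zero => exact ⟨y, by simp, by simp⟩
  | succ n ih =>
    have hfn : ContDiff ℝ n f := hf.of_le (by exact_mod_cast n.le_succ)
    obtain ⟨ξ, hξ, hΔ⟩ := ih (hfn.fwdDiff h)
    obtain ⟨η, hη, hslope⟩ := exists_deriv_eq_slope (iteratedDeriv n f)
      (lt_add_of_pos_right ξ hh)
      (hf.continuous_iteratedDeriv n (by exact_mod_cast n.le_succ)).continuousOn
      (hf.differentiable_iteratedDeriv n (by exact_mod_cast n.lt_succ_self)).differentiableOn
    refine ⟨η, ⟨by linarith [hξ.1, hη.1], by push_cast; linarith [hξ.2, hη.2]⟩, ?_⟩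
    rw [Function.iterate_succ_apply, hΔ, iteratedDeriv_fwdDiff hfn, iteratedDeriv_succ, hslope,
      fwdDiff, add_sub_cancel_left]
    field_simp
    ring

theorem exists_abs_pow_sub_fwdDiff_ridge_eq {σ : ℝ → ℝ} {k : ℕ} (hσ : ContDiff ℝ k σ) {h : ℝ}
    (hh : 0 < h) (x : ℝ) {b : ℝ} (hd : iteratedDeriv k σ b ≠ 0) :
    ∃ ξ ∈ Icc 0 (k * h),
      |x ^ k - (Δ_[h])^[k] (fun w => σ (w * x + b)) 0 / (iteratedDeriv k σ b * h ^ k)| =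
        |x| ^ k * |iteratedDeriv k σ (ξ * x + b) - iteratedDeriv k σ b| / |iteratedDeriv k σ b| := by
  obtain ⟨ξ, hξ, hΔ⟩ := exists_fwdDiff_iterate_eq_pow_mul_iteratedDeriv
    (f := fun w => σ (w * x + b)) (by fun_prop) hh 0
  refine ⟨ξ, by simpa using hξ, ?_⟩
  rw [hΔ, iteratedDeriv_comp_mul_add_const hσ, abs_sub_comm _ (iteratedDeriv k σ b), ← abs_pow,
    ← abs_mul, ← abs_div]
  congr 1
  field_simp

/-- Step 1 of Pinkus's universality proof: if `σ ∈ C^∞(ℝ)` and for every `k` some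
derivative value `σ^{(k)}(b_k) ≠ 0`, then every monomial `x ↦ x^k` lies in the closure,
with respect to uniform convergence on compact subsets of `ℝ`, of the span of
`{x ↦ σ(wx + b) : w, b ∈ ℝ}`. -/
theorem stmt_7 (σ : ℝ → ℝ) (hσ : ContDiff ℝ (⊤ : ℕ∞) σ)
    (hder : ∀ k : ℕ, ∃ b : ℝ, iteratedDeriv k σ b ≠ 0) :
    ∀ (k : ℕ) (K : Set ℝ), IsCompact K → ∀ ε > (0 : ℝ),
      ∃ (N : ℕ) (c w b : Fin N → ℝ),
        ∀ x ∈ K, |x ^ k - ∑ i, c i * σ (w i * x + b i)| ≤ ε := by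
  intro k K hK ε hε
  obtain ⟨b, hd⟩ := hder k
  set d := iteratedDeriv k σ b
  have hσk : ContDiff ℝ k σ := hσ.of_le (by exact_mod_cast le_top)
  obtain ⟨M, hMK⟩ := hK.isBounded.exists_norm_le
  have hnear : ∀ᶠ t in 𝓝 0, |M| ^ k * |iteratedDeriv k σ (t + b) - d| < ε * |d| := by
    have hcont := hσk.continuous_iteratedDeriv k le_rfl
    exact ((by fun_prop : Continuous fun t => |M| ^ k * |iteratedDeriv k σ (t + b) - d|).tendsto'
      0 0 (by simp [d])).eventually (gt_mem_nhds (by positivity))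
  obtain ⟨δ, hδ, hδnear⟩ := Metric.eventually_nhds_iff.1 hnear
  obtain ⟨h, hh, hhδ⟩ := exists_pos_mul_lt hδ (k * |M|)
  refine ⟨k + 1, fun i => (-1) ^ (k - (i : ℕ)) * k.choose i / (d * h ^ k), fun i => i * h,
    fun _ => b, fun x hx => ?_⟩
  have hxM : |x| ≤ |M| := (hMK x hx).trans (le_abs_self M)
  obtain ⟨ξ, hξ, herr⟩ := exists_abs_pow_sub_fwdDiff_ridge_eq hσk hh x hd
  have hξx : |ξ * x| ≤ k * |M| * h := by
    rw [abs_mul, abs_of_nonneg hξ.1, mul_right_comm]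
    exact mul_le_mul hξ.2 hxM (abs_nonneg x) (by positivity)
  have hsum : ∑ i : Fin (k + 1), (-1) ^ (k - (i : ℕ)) * k.choose i / (d * h ^ k) * σ (i * h * x + b)
      = (Δ_[h])^[k] (fun w => σ (w * x + b)) 0 / (d * h ^ k) := by
    rw [fwdDiff_iterate_eq_sum_fin, Finset.sum_div]
    congr! 1 with i
    simp only [zero_add]
    ring
  rw [hsum, herr, div_le_iff₀ (abs_pos.2 hd)]
  exact (mul_le_mul_of_nonneg_right (pow_le_pow_left₀ (abs_nonneg x) hxM k) (abs_nonneg _)).trans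
    (hδnear (by simpa using hξx.trans_lt hhδ)).le
end

section
/- Let f : [0,1] → ℝ be piecewise affine with p affine pieces, and let h : [0,1] → [0,1] be piecewise affine with q affine pieces. Then the L¹([0,1]) distance between f and g_m (the m-fold tent map composition, having 2^m pieces) is bounded below: if p < 2^{m-2} then ∫₀¹ |f(x) - g_m(x)| dx ≥ (2^{m-1} - 2p)/2^{m+2} ≥ 1/16 · (1 - 2p/2^{m-1}). -/
/-!
On the tooth `[k / 2^n, (k + 1) / 2^n]`, `n = m - 1`, the sawtooth `g_m` is the tent rescaled, and
an affine function stays at `L¹` distance at least `1/4` from the tent on `[0, 1]`; so every tooth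
lying inside one affine piece of `f` contributes at least `1 / 2^(n+2)`. Since the pieces are
intervals, a piece contains the left end of at most one tooth that it does not contain entirely,
so at most `p` of the `2^n` teeth are lost.
-/

open MeasureTheory intervalIntegral

open Set Finset

lemma tent_of_le_half {t : ℝ} (h : t ≤ 1 / 2) : tent t = 2 * t :=
  min_eq_left (by linarith)

lemma tent_of_half_le {t : ℝ} (h : 1 / 2 ≤ t) : tent t = 2 - 2 * t :=
  min_eq_right (by linarith)

lemma tent_one_sub (t : ℝ) : tent (1 - t) = tent t := by
  unfold tent; rw [min_comm]; ring_nf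

lemma continuous_tent : Continuous tent := by unfold tent; fun_prop

lemma tent_iterate_succ_nat_add_div (n : ℕ) :
    ∀ k : ℕ, k < 2 ^ n → ∀ t ∈ Icc (0 : ℝ) 1, tent^[n + 1] ((k + t) / 2 ^ n) = tent t := by
  induction n with
  | zero =>
    intro k hk t _
    obtain rfl : k = 0 := by omega
    simp
  | succ n ih =>
    intro k hk t ⟨ht0, ht1⟩
    rw [pow_succ] at hk
    obtain ⟨j, rfl | rfl⟩ := Nat.even_or_odd' k
    · have hx : ((2 * j : ℕ) + t) / (2 : ℝ) ^ (n + 1) = (j + t / 2) / 2 ^ n := by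
        push_cast; field_simp; ring
      rw [hx, Function.iterate_succ_apply', ih j (by omega) _ ⟨by linarith, by linarith⟩,
        tent_of_le_half (t := t / 2) (by linarith)]
      ring_nf
    · have hx : ((2 * j + 1 : ℕ) + t) / (2 : ℝ) ^ (n + 1) = (j + (1 + t) / 2) / 2 ^ n := by
        push_cast; field_simp; ring
      rw [hx, Function.iterate_succ_apply', ih j (by omega) _ ⟨by linarith, by linarith⟩,
        tent_of_half_le (t := (1 + t) / 2) (by linarith), ← tent_one_sub t]
      ring_nf

lemma integral_affine (c e u v : ℝ) :
    ∫ t in u..v, (c * t + e) = c * (v ^ 2 - u ^ 2) / 2 + e * (v - u) := by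
  rw [integral_add ((continuous_const_mul c).intervalIntegrable _ _) intervalIntegrable_const,
    intervalIntegral.integral_const_mul, integral_id, intervalIntegral.integral_const, smul_eq_mul]
  ring

lemma integral_affine_le_integral_abs {F : ℝ → ℝ} {u v : ℝ} (huv : u ≤ v)
    (hF : IntervalIntegrable F volume u v) (c e : ℝ) (h : ∀ t ∈ Icc u v, c * t + e ≤ |F t|) :
    c * (v ^ 2 - u ^ 2) / 2 + e * (v - u) ≤ ∫ t in u..v, |F t| := by
  rw [← integral_affine]
  have hcont : Continuous fun t => c * t + e := by fun_prop
  exact integral_mono_on huv (hcont.intervalIntegrable _ _) hF.abs h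

/-- Testing against the sign pattern `+, -, -, +` on the quarters of `[0,1]`, which is orthogonal
to affine functions, picks up exactly `1/4` from the tent. -/
lemma quarter_le_integral_abs_affine_sub_tent (a b : ℝ) :
    1 / 4 ≤ ∫ t in (0 : ℝ)..1, |a * t + b - tent t| := by
  have hi : ∀ u v : ℝ, IntervalIntegrable (fun t => a * t + b - tent t) volume u v := fun u v =>
    ((continuous_const_mul a).add continuous_const |>.sub continuous_tent).intervalIntegrable u v
  have q1 := integral_affine_le_integral_abs (u := 0) (v := 1 / 4) (by norm_num) (hi _ _)
    (a - 2) b fun t ht => by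
      rw [tent_of_le_half (by linarith [ht.2])]; linarith [le_abs_self (a * t + b - 2 * t)]
  have q2 := integral_affine_le_integral_abs (u := 1 / 4) (v := 1 / 2) (by norm_num) (hi _ _)
    (2 - a) (-b) fun t ht => by
      rw [tent_of_le_half (by linarith [ht.2])]; linarith [neg_le_abs (a * t + b - 2 * t)]
  have q3 := integral_affine_le_integral_abs (u := 1 / 2) (v := 3 / 4) (by norm_num) (hi _ _)
    (-a - 2) (2 - b) fun t ht => by
      rw [tent_of_half_le (by linarith [ht.1])]; linarith [neg_le_abs (a * t + b - (2 - 2 * t))]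
  have q4 := integral_affine_le_integral_abs (u := 3 / 4) (v := 1) (by norm_num) (hi _ _)
    (a + 2) (b - 2) fun t ht => by
      rw [tent_of_half_le (by linarith [ht.1])]; linarith [le_abs_self (a * t + b - (2 - 2 * t))]
  rw [← integral_add_adjacent_intervals (b := 1 / 2) (hi _ _).abs (hi _ _).abs,
    ← integral_add_adjacent_intervals (b := 1 / 4) (hi _ _).abs (hi _ _).abs,
    ← integral_add_adjacent_intervals (a := 1 / 2) (b := 3 / 4) (hi _ _).abs (hi _ _).abs]
  linarith

lemma le_integral_abs_sub_tent_iterate_of_affineOn {n k : ℕ} (hk : k < 2 ^ n) {f : ℝ → ℝ}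
    {a b : ℝ} (hf : ∀ x ∈ Icc ((k : ℝ) / 2 ^ n) ((k + 1) / 2 ^ n), f x = a * x + b) :
    1 / (4 * 2 ^ n) ≤ ∫ x in (k : ℝ) / 2 ^ n..(k + 1) / 2 ^ n, |f x - tent^[n + 1] x| := by
  have h2n : (0 : ℝ) < 2 ^ n := by positivity
  have hscale := integral_comp_add_div (a := 0) (b := 1) (fun x => |f x - tent^[n + 1] x|)
    h2n.ne' ((k : ℝ) / 2 ^ n)
  rw [zero_div, add_zero, ← add_div, smul_eq_mul] at hscale
  have hrescaled :
      ∫ t in (0 : ℝ)..1, |f (k / 2 ^ n + t / 2 ^ n) - tent^[n + 1] (k / 2 ^ n + t / 2 ^ n)|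
        = ∫ t in (0 : ℝ)..1, |a / 2 ^ n * t + (a * k / 2 ^ n + b) - tent t| := by
    refine integral_congr fun t ht => ?_
    rw [Set.uIcc_of_le zero_le_one] at ht
    have hx : (k : ℝ) / 2 ^ n + t / 2 ^ n = (k + t) / 2 ^ n := by ring
    have hmem : (k + t) / 2 ^ n ∈ Icc ((k : ℝ) / 2 ^ n) ((k + 1) / 2 ^ n) :=
      ⟨by gcongr; linarith [ht.1], by gcongr; linarith [ht.2]⟩
    rw [hx, hf _ hmem, tent_iterate_succ_nat_add_div n k hk t ht]
    ring_nf
  have hquarter := quarter_le_integral_abs_affine_sub_tent (a / 2 ^ n) (a * k / 2 ^ n + b)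
  rw [← hrescaled, hscale] at hquarter
  rw [div_le_iff₀ (by positivity)]
  linarith

lemma integrableOn_iUnion_of_affineOn {ι : Type*} [Finite ι] {f : ℝ → ℝ} {s : ι → Set ℝ}
    (hs : ∀ i, (s i).OrdConnected) (hbdd : ∀ i, Bornology.IsBounded (s i))
    (hf : ∀ i, ∃ a b : ℝ, ∀ x ∈ s i, f x = a * x + b) :
    IntegrableOn f (⋃ i, s i) := by
  refine integrableOn_finite_iUnion.mpr fun i => ?_
  obtain ⟨a, b, hab⟩ := hf i
  have hcont : Continuous fun x => a * x + b := by fun_prop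
  exact ((hcont.continuousOn.integrableOn_compact (hbdd i).isCompact_closure).mono_set
    subset_closure).congr_fun (fun x hx => (hab x hx).symm) (hs i).measurableSet

open Classical in
lemma card_filter_not_subset_le {ι : Type*} [Fintype ι] {s : ι → Set ℝ}
    (hs : ∀ i, (s i).OrdConnected) {a : ℕ → ℝ} (ha : Monotone a) {N : ℕ}
    (hcover : ∀ k < N, a k ∈ ⋃ i, s i) :
    #{k ∈ range N | ¬∃ i, Icc (a k) (a (k + 1)) ⊆ s i} ≤ Fintype.card ι := by
  set bad := {k ∈ range N | ¬∃ i, Icc (a k) (a (k + 1)) ⊆ s i}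
  have hbad : bad ⊆ univ.biUnion fun i => {k ∈ bad | a k ∈ s i} := by
    intro k hk
    obtain ⟨i, hi⟩ := mem_iUnion.mp (hcover k (mem_range.mp (mem_filter.mp hk).1))
    exact mem_biUnion.mpr ⟨i, mem_univ i, mem_filter.mpr ⟨hk, hi⟩⟩
  -- two bad teeth starting in the same piece `s i` would force the first to lie in `s i`
  have hle : ∀ i, ∀ k ∈ {k ∈ bad | a k ∈ s i}, ∀ k' ∈ {k ∈ bad | a k ∈ s i}, ¬k < k' := by
    intro i k hk k' hk' hlt
    simp only [bad, mem_filter] at hk hk'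
    exact hk.1.2 ⟨i, (Icc_subset_Icc_right (ha hlt)).trans ((hs i).out hk.2 hk'.2)⟩
  calc #bad ≤ #(univ.biUnion fun i => {k ∈ bad | a k ∈ s i}) := card_le_card hbad
    _ ≤ ∑ i, #{k ∈ bad | a k ∈ s i} := card_biUnion_le
    _ ≤ ∑ _i : ι, 1 := sum_le_sum fun i _ => card_le_one.mpr fun k hk k' hk' =>
        le_antisymm (not_lt.mp (hle i k' hk' k hk)) (not_lt.mp (hle i k hk k' hk'))
    _ = Fintype.card ι := by simp

theorem le_integral_abs_sub_tent_iterate_of_piecewise_affine {ι : Type*} [Fintype ι] (n : ℕ)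
    {f : ℝ → ℝ} {s : ι → Set ℝ} (hs : ∀ i, (s i).OrdConnected) (hcover : ⋃ i, s i = Icc (0 : ℝ) 1)
    (hf : ∀ i, ∃ a b : ℝ, ∀ x ∈ s i, f x = a * x + b) :
    ((2 : ℝ) ^ n - Fintype.card ι) / 2 ^ (n + 2) ≤ ∫ x in (0 : ℝ)..1, |f x - tent^[n + 1] x| := by
  classical
  set F : ℝ → ℝ := fun x => |f x - tent^[n + 1] x|
  set a : ℕ → ℝ := fun k => k / 2 ^ n
  have ha : Monotone a := fun k k' h => by simp only [a]; gcongr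
  have ha_mem : ∀ k ≤ 2 ^ n, a k ∈ Icc (0 : ℝ) 1 := fun k hk =>
    ⟨by positivity, (div_le_one (by positivity)).mpr (by exact_mod_cast hk)⟩
  have hF : IntegrableOn F (Icc 0 1) := by
    have hf_int : IntegrableOn f (Icc 0 1) := hcover ▸ integrableOn_iUnion_of_affineOn hs
      (fun i => Metric.isBounded_Icc (0 : ℝ) 1 |>.subset (hcover ▸ subset_iUnion s i)) hf
    exact (hf_int.sub ((continuous_tent.iterate _).integrableOn_Icc)).abs
  have hF_tooth : ∀ k < 2 ^ n, IntervalIntegrable F volume (a k) (a (k + 1)) := fun k hk =>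
    (hF.mono_set (uIcc_subset_Icc (ha_mem k hk.le) (ha_mem (k + 1) hk))).intervalIntegrable
  have hsum : ∑ k ∈ range (2 ^ n), ∫ x in a k..a (k + 1), F x = ∫ x in (0 : ℝ)..1, F x := by
    rw [sum_integral_adjacent_intervals hF_tooth]
    simp [a]
  set good := {k ∈ range (2 ^ n) | ∃ i, Icc (a k) (a (k + 1)) ⊆ s i}
  have hgood : (2 ^ n : ℝ) ≤ #good + Fintype.card ι := by
    have hbad := card_filter_not_subset_le hs ha (N := 2 ^ n) fun k hk =>
      hcover ▸ ha_mem k hk.le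
    have hsplit : #good + #{k ∈ range (2 ^ n) | ¬∃ i, Icc (a k) (a (k + 1)) ⊆ s i} = 2 ^ n := by
      rw [card_filter_add_card_filter_not, card_range]
    exact_mod_cast (by omega : 2 ^ n ≤ #good + Fintype.card ι)
  calc ((2 : ℝ) ^ n - Fintype.card ι) / 2 ^ (n + 2) ≤ #good * (1 / (4 * 2 ^ n)) := by
        rw [pow_add, div_le_iff₀ (by positivity)]
        field_simp
        linarith
    _ ≤ ∑ k ∈ good, ∫ x in a k..a (k + 1), F x := by
        rw [← nsmul_eq_mul, ← sum_const]
        refine sum_le_sum fun k hk => ?_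
        obtain ⟨hk, i, hi⟩ := mem_filter.mp hk
        obtain ⟨c, d, hcd⟩ := hf i
        simp only [a, Nat.cast_add, Nat.cast_one] at hi ⊢
        exact le_integral_abs_sub_tent_iterate_of_affineOn (mem_range.mp hk)
          fun x hx => hcd x (hi hx)
    _ ≤ ∑ k ∈ range (2 ^ n), ∫ x in a k..a (k + 1), F x :=
        sum_le_sum_of_subset_of_nonneg (filter_subset _ _) fun k _ _ =>
          integral_nonneg (ha k.le_succ) fun x _ => abs_nonneg _
    _ = ∫ x in (0 : ℝ)..1, F x := hsum

theorem stmt_12_general (m p : ℕ) (f : ℝ → ℝ)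
    (If : Fin p → Set ℝ) (hIf : ∀ i, (If i).OrdConnected)
    (hIfu : (⋃ i, If i) = Set.Icc (0 : ℝ) 1)
    (hIfa : ∀ i, ∃ a b : ℝ, ∀ x ∈ If i, f x = a * x + b)
    (hp : p < 2 ^ (m - 2)) :
    ((2 : ℝ) ^ (m - 1) - 2 * p) / 2 ^ (m + 2) ≤ ∫ x in (0 : ℝ)..1, |f x - tent^[m] x| ∧
    (1 / 16 : ℝ) * (1 - 2 * p / 2 ^ (m - 1)) ≤
      ((2 : ℝ) ^ (m - 1) - 2 * p) / 2 ^ (m + 2) := by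
  have hp_pos : 0 < p := by
    obtain ⟨i, -⟩ := mem_iUnion.mp (hIfu ▸ left_mem_Icc.mpr zero_le_one : (0 : ℝ) ∈ ⋃ i, If i)
    exact i.pos
  obtain ⟨n, rfl⟩ : ∃ n, m = n + 2 := ⟨m - 2, by
    by_contra hm
    rw [Nat.sub_eq_zero_of_le (by omega), pow_zero] at hp
    omega⟩
  have hbound := le_integral_abs_sub_tent_iterate_of_piecewise_affine (n + 1) hIf hIfu hIfa
  rw [Fintype.card_fin] at hbound
  rw [show n + 2 - 2 = n by omega] at hp
  rw [show n + 2 - 1 = n + 1 by omega]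
  have hp' : (p : ℝ) + 1 ≤ 2 ^ n := by exact_mod_cast hp
  have h2n : (0 : ℝ) < 2 ^ n := by positivity
  simp only [pow_succ] at hbound ⊢
  constructor
  · refine le_trans ?_ hbound
    rw [div_le_div_iff₀ (by positivity) (by positivity)]
    nlinarith
  · rw [le_div_iff₀ (by positivity)]
    field_simp
    nlinarith

/-- L¹ lower bound for approximating the sawtooth `g_m` by a piecewise affine function
with few pieces: if `f` is piecewise affine on `[0,1]` with `p < 2^{m-2}` pieces (and `h`
is any piecewise affine self-map of `[0,1]` with `q` pieces), then
`∫₀¹ |f - g_m| ≥ (2^{m-1} - 2p)/2^{m+2} ≥ (1/16)(1 - 2p/2^{m-1})`. -/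
theorem stmt_12 (m p q : ℕ) (hm : 2 ≤ m) (f h : ℝ → ℝ)
    (If : Fin p → Set ℝ) (hIf : ∀ i, (If i).OrdConnected)
    (hIfd : Pairwise (Function.onFun Disjoint If))
    (hIfu : (⋃ i, If i) = Set.Icc (0 : ℝ) 1)
    (hIfa : ∀ i, ∃ a b : ℝ, ∀ x ∈ If i, f x = a * x + b)
    (Ih : Fin q → Set ℝ) (hIh : ∀ i, (Ih i).OrdConnected)
    (hIhd : Pairwise (Function.onFun Disjoint Ih))
    (hIhu : (⋃ i, Ih i) = Set.Icc (0 : ℝ) 1)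
    (hIha : ∀ i, ∃ a b : ℝ, ∀ x ∈ Ih i, h x = a * x + b)
    (hhmap : ∀ x ∈ Set.Icc (0 : ℝ) 1, h x ∈ Set.Icc (0 : ℝ) 1)
    (hp : p < 2 ^ (m - 2)) :
    ((2 : ℝ) ^ (m - 1) - 2 * p) / 2 ^ (m + 2) ≤ ∫ x in (0 : ℝ)..1, |f x - tent^[m] x| ∧
    (1 / 16 : ℝ) * (1 - 2 * p / 2 ^ (m - 1)) ≤
      ((2 : ℝ) ^ (m - 1) - 2 * p) / 2 ^ (m + 2) :=
  stmt_12_general m p f If hIf hIfu hIfa hp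
end

section
/- Fix L ∈ ℕ and K ≥ 2. Let f = g_{KL} be the (K·L)-fold composition of the tent map g(x)=min{2x,2-2x}, which is computable by a ReLU network with L·K hidden layers of width 2 (hence O(K·L) neurons). If f is also exactly representable by a ReLU network with L̃ ≤ L hidden layers and at most n neurons per layer, then the total number of neurons of that network is at least c·L̃·K^{L/L̃} for an absolute constant c > 0. -/
/-- Hidden layer activations of a deep ReLU network with scalar input. -/
noncomputable def reluHidden (w : ℕ → ℕ) (c : Fin (w 0) → ℝ)
    (A : ∀ ℓ, Fin (w (ℓ + 1)) → Fin (w ℓ) → ℝ) (b : ∀ ℓ, Fin (w ℓ) → ℝ) :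
    (ℓ : ℕ) → ℝ → Fin (w ℓ) → ℝ
  | 0 => fun x i => max (c i * x + b 0 i) 0
  | (ℓ + 1) => fun x i =>
      max ((∑ j, A ℓ i j * reluHidden w c A b ℓ x j) + b (ℓ + 1) i) 0

open Set Filter Topology

def AffineOn (f : ℝ → ℝ) (I : Set ℝ) : Prop := ∃ m q : ℝ, ∀ x ∈ I, f x = m * x + q

def PiecewiseAffine (s : Finset ℝ) (f : ℝ → ℝ) : Prop :=
  ∀ a b : ℝ, (∀ z ∈ s, z ∉ Ioo a b) → AffineOn f (Ioo a b)

namespace AffineOn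

variable {f : ℝ → ℝ} {I : Set ℝ}

theorem add_eq_two_mul {x d : ℝ} (hf : AffineOn f I) (hl : x - d ∈ I) (hx : x ∈ I)
    (hr : x + d ∈ I) : f (x - d) + f (x + d) = 2 * f x := by
  obtain ⟨m, q, h⟩ := hf
  rw [h _ hl, h _ hx, h _ hr]
  ring

theorem eq_of_apply_eq_zero {r y u : ℝ} (hf : AffineOn f I) (hr : r ∈ I) (hy : y ∈ I)
    (hu : u ∈ I) (hfr : f r = 0) (hfy : f y = 0) (hfu : f u ≠ 0) : y = r := by
  obtain ⟨m, q, h⟩ := hf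
  rw [h r hr] at hfr
  rw [h y hy] at hfy
  rw [h u hu] at hfu
  have hm : m ≠ 0 := by
    rintro rfl
    exact hfu (by linarith)
  exact mul_left_cancel₀ hm (by linarith)

theorem max_zero (hf : AffineOn f I) (h : (∀ x ∈ I, 0 ≤ f x) ∨ ∀ x ∈ I, f x ≤ 0) :
    AffineOn (fun x => max (f x) 0) I := by
  rcases h with h | h
  · obtain ⟨m, q, hmq⟩ := hf
    exact ⟨m, q, fun x hx => (max_eq_left (h x hx)).trans (hmq x hx)⟩
  · exact ⟨0, 0, fun x hx => by simp [max_eq_right (h x hx)]⟩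

theorem exists_zero_of_neg_of_pos {a b x y : ℝ} (hf : AffineOn f (Ioo a b)) (hx : x ∈ Ioo a b)
    (hy : y ∈ Ioo a b) (hfx : f x < 0) (hfy : 0 < f y) :
    ∃ r ∈ Ioo a b, f r = 0 ∧ ∃ u ∈ Ioo r b, f u ≠ 0 := by
  obtain ⟨m, q, h⟩ := hf
  rw [h x hx] at hfx
  rw [h y hy] at hfy
  have hm : m ≠ 0 := by
    rintro rfl
    linarith
  have hr : m * (-q / m) + q = 0 := by field_simp; ring
  rcases hm.lt_or_gt with hm | hm
  · have hyr : y < -q / m := by nlinarith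
    have hrx : -q / m < x := by nlinarith
    have hrI : -q / m ∈ Ioo a b := ⟨hy.1.trans hyr, hrx.trans hx.2⟩
    exact ⟨_, hrI, by rw [h _ hrI, hr], x, ⟨hrx, hx.2⟩, by rw [h x hx]; exact hfx.ne⟩
  · have hxr : x < -q / m := by nlinarith
    have hry : -q / m < y := by nlinarith
    have hrI : -q / m ∈ Ioo a b := ⟨hx.1.trans hxr, hry.trans hy.2⟩
    exact ⟨_, hrI, by rw [h _ hrI, hr], y, ⟨hry, hy.2⟩, by rw [h y hy]; exact hfy.ne'⟩

end AffineOn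

namespace PiecewiseAffine

variable {s t : Finset ℝ} {f : ℝ → ℝ}

theorem of_affine (m q : ℝ) : PiecewiseAffine ∅ (fun x => m * x + q) :=
  fun _ _ _ => ⟨m, q, fun _ _ => rfl⟩

theorem mono (hf : PiecewiseAffine s f) (hst : s ⊆ t) : PiecewiseAffine t f :=
  fun a b h => hf a b fun z hz => h z (hst hz)

theorem sum_mul_add {n : ℕ} {F : Fin n → ℝ → ℝ} (v : Fin n → ℝ) (v0 : ℝ)
    (hF : ∀ j, PiecewiseAffine s (F j)) : PiecewiseAffine s (fun x => (∑ j, v j * F j x) + v0) := by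
  intro a b hab
  choose m q hmq using fun j => hF j a b hab
  refine ⟨∑ j, v j * m j, (∑ j, v j * q j) + v0, fun x hx => ?_⟩
  simp only [hmq _ x hx, Finset.sum_mul, ← Finset.sum_add_distrib, ← add_assoc]
  congr 1
  exact Finset.sum_congr rfl fun j _ => by ring

theorem eventually_add_eq_two_mul (hf : PiecewiseAffine s f) {x : ℝ} (hx : x ∉ s) :
    ∀ᶠ d in 𝓝[>] 0, f (x - d) + f (x + d) = 2 * f x := by
  have hopen : IsOpen ((s : Set ℝ)ᶜ) := s.finite_toSet.isClosed.isOpen_compl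
  obtain ⟨ε, hε, hball⟩ := Metric.isOpen_iff.mp hopen x hx
  rw [Real.ball_eq_Ioo] at hball
  have haff := hf _ _ fun z hz hzI => hball hzI hz
  filter_upwards [Ioo_mem_nhdsGT hε] with d hd
  exact haff.add_eq_two_mul ⟨by linarith [hd.2], by linarith [hd.1]⟩ ⟨by linarith, by linarith⟩
    ⟨by linarith [hd.1], by linarith [hd.2]⟩

theorem isLeast_zero (hf : PiecewiseAffine s f) {c r u b : ℝ} (hs : ∀ z ∈ s, z ∉ Ioo c b)
    (hcr : c < r) (hru : r < u) (hub : u < b) (hfr : f r = 0) (hfu : f u ≠ 0) :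
    IsLeast ({x | f x = 0} ∩ Ioi c) r := by
  refine ⟨⟨hfr, hcr⟩, fun y ⟨hfy, hcy⟩ => le_of_not_gt fun hyr => hyr.ne ?_⟩
  exact (hf c b hs).eq_of_apply_eq_zero ⟨hcr, hru.trans hub⟩ ⟨hcy, hyr.trans (hru.trans hub)⟩
    ⟨hcr.trans hru, hub⟩ hfr hfy hfu

/-- A new breakpoint of `max f 0` is a zero `r` at which `f` changes sign. If `z` is the last
breakpoint of `f` below `r` (or there is none), `r` is the first zero of `f` after `z`. -/
theorem max_zero (hf : PiecewiseAffine s f) :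
    ∃ e : Finset ℝ, e.card ≤ s.card + 1 ∧ PiecewiseAffine (s ∪ e) (fun x => max (f x) 0) := by
  classical
  set Z : Set ℝ := {x | f x = 0}
  refine ⟨insert (sInf Z) (s.image fun z => sInf (Z ∩ Ioi z)),
    (Finset.card_insert_le _ _).trans (Nat.add_le_add_right Finset.card_image_le 1), ?_⟩
  intro a b hab
  have hs : ∀ z ∈ s, z ∉ Ioo a b := fun z hz => hab z (Finset.mem_union_left _ hz)
  refine (hf a b hs).max_zero ?_
  by_contra! h
  obtain ⟨⟨x, hx, hfx⟩, y, hy, hfy⟩ := h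
  obtain ⟨r, hr, hfr, u, hu, hfu⟩ := (hf a b hs).exists_zero_of_neg_of_pos hx hy hfx hfy
  have hleast : ∀ c < r, (∀ z ∈ s, z < r → z ≤ c) → IsLeast (Z ∩ Ioi c) r := by
    refine fun c hcr hc => hf.isLeast_zero (fun z hz hzI => ?_) hcr hu.1 hu.2 hfr hfu
    rcases lt_or_ge z r with hzr | hrz
    · exact (hc z hz hzr).not_gt hzI.1
    · exact hs z hz ⟨hr.1.trans_le hrz, hzI.2⟩
  refine hab r (Finset.mem_union_right _ ?_) hr
  by_cases hbelow : ∃ z ∈ s, z < r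
  · obtain ⟨z₀, hz₀, hz₀max⟩ := Finset.exists_max_image (s.filter (· < r)) id
      (by simpa [Finset.filter_nonempty_iff] using hbelow)
    rw [Finset.mem_filter] at hz₀
    refine Finset.mem_insert_of_mem ?_
    rw [← (hleast z₀ hz₀.2 fun z hz hzr => hz₀max z (Finset.mem_filter.mpr ⟨hz, hzr⟩)).csInf_eq]
    exact Finset.mem_image_of_mem _ hz₀.1
  · push Not at hbelow
    have hZ : IsLeast Z r := ⟨hfr, fun t ht => le_of_not_gt fun htr =>
      ((hleast (t - 1) (by linarith) fun z hz hzr => absurd hzr (hbelow z hz).not_gt).2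
        ⟨ht, sub_one_lt t⟩).not_gt htr⟩
    rw [← hZ.csInf_eq]
    exact Finset.mem_insert_self _ _

theorem relu_layer {n : ℕ} {F : Fin n → ℝ → ℝ} (hF : ∀ i, PiecewiseAffine s (F i)) :
    ∃ t : Finset ℝ, t.card + 1 ≤ (s.card + 1) * (n + 1) ∧
      ∀ i, PiecewiseAffine t (fun x => max (F i x) 0) := by
  classical
  choose e he hfe using fun i => (hF i).max_zero
  refine ⟨s ∪ Finset.univ.biUnion e, ?_, fun i => (hfe i).mono
    (Finset.union_subset_union_right (Finset.subset_biUnion_of_mem e (Finset.mem_univ i)))⟩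
  have hunion : (Finset.univ.biUnion e).card ≤ n * (s.card + 1) :=
    calc (Finset.univ.biUnion e).card ≤ ∑ i, (e i).card := Finset.card_biUnion_le
      _ ≤ ∑ _i : Fin n, (s.card + 1) := Finset.sum_le_sum fun i _ => he i
      _ = n * (s.card + 1) := by simp
  have := Finset.card_union_le s (Finset.univ.biUnion e)
  nlinarith

end PiecewiseAffine

theorem reluHidden_piecewiseAffine (w : ℕ → ℕ) (c : Fin (w 0) → ℝ)
    (A : ∀ ℓ, Fin (w (ℓ + 1)) → Fin (w ℓ) → ℝ) (b : ∀ ℓ, Fin (w ℓ) → ℝ) (ℓ : ℕ) :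
    ∃ s : Finset ℝ, s.card + 1 ≤ ∏ i ∈ Finset.range (ℓ + 1), (w i + 1) ∧
      ∀ i, PiecewiseAffine s (fun x => reluHidden w c A b ℓ x i) := by
  induction ℓ with
  | zero =>
    obtain ⟨t, ht, hft⟩ :=
      PiecewiseAffine.relu_layer fun i => PiecewiseAffine.of_affine (c i) (b 0 i)
    exact ⟨t, by simpa using ht, hft⟩
  | succ ℓ ih =>
    obtain ⟨s, hs, hfs⟩ := ih
    obtain ⟨t, ht, hft⟩ := PiecewiseAffine.relu_layer fun i =>
      PiecewiseAffine.sum_mul_add (A ℓ i) (b (ℓ + 1) i) hfs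
    rw [Finset.prod_range_succ]
    exact ⟨t, ht.trans (Nat.mul_le_mul_right _ hs), hft⟩

theorem tent_mapsTo : MapsTo tent (Icc 0 1) (Icc 0 1) := fun x hx => by
  simp only [tent, mem_Icc] at hx ⊢
  constructor
  · exact le_min (by linarith) (by linarith)
  · rcases le_total x (1 / 2) with h | h
    · exact (min_le_left _ _).trans (by linarith)
    · exact (min_le_right _ _).trans (by linarith)

theorem tent_eq_two_mul_sub (y : ℝ) : tent y = 2 * y - 4 * max (y - 1 / 2) 0 := by
  rcases le_total y (1 / 2) with h | h
  · rw [tent, max_eq_right (by linarith), min_eq_left (by linarith)]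
    ring
  · rw [tent, max_eq_left (by linarith), min_eq_right (by linarith)]
    ring

theorem tent_iterate_eq_abs (m : ℕ) {x : ℝ} (j : ℤ) (hx : x ∈ Icc 0 1)
    (hj : |2 ^ m * x - 2 * j| ≤ 1) : tent^[m] x = |2 ^ m * x - 2 * j| := by
  induction m generalizing x j with
  | zero =>
    rw [pow_zero, one_mul] at hj ⊢
    obtain ⟨hlo, hhi⟩ := abs_le.mp hj
    have hj₀ : (-1 : ℤ) < j := by exact_mod_cast (show (-1 : ℝ) < j by linarith [hx.1])
    have hj₁ : j < 2 := by exact_mod_cast (show (j : ℝ) < 2 by linarith [hx.2])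
    interval_cases j
    · simp [abs_of_nonneg hx.1]
    · have hx1 : x = 1 := le_antisymm hx.2 (by push_cast at hlo; linarith)
      norm_num [hx1]
  | succ m ih =>
    rw [Function.iterate_succ_apply]
    rcases le_total x (1 / 2) with h | h
    · have hx' : 2 ^ m * tent x - 2 * j = 2 ^ (m + 1) * x - 2 * j := by
        rw [tent, min_eq_left (by linarith)]
        ring
      rw [ih j (tent_mapsTo hx) (hx' ▸ hj), hx']
    · have hx' : 2 ^ m * tent x - 2 * ((2 ^ m - j : ℤ) : ℝ) = -(2 ^ (m + 1) * x - 2 * j) := by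
        rw [tent, min_eq_right (by linarith)]
        push_cast
        ring
      rw [ih _ (tent_mapsTo hx) (by rwa [hx', abs_neg]), hx', abs_neg]

namespace PiecewiseAffine

variable {s : Finset ℝ} {f : ℝ → ℝ}

theorem dyadic_mem_of_eqOn_tent_iterate {m k : ℕ} (hf : PiecewiseAffine s f)
    (hfm : EqOn f tent^[m] (Icc 0 1)) (hk₀ : 0 < k) (hkm : k < 2 ^ m) :
    (k : ℝ) / 2 ^ m ∈ s := by
  by_contra hks
  have h2m : (0 : ℝ) < 2 ^ m := by positivity
  obtain ⟨d, hmid, hd₀, hd⟩ := ((hf.eventually_add_eq_two_mul hks).and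
    (Ioc_mem_nhdsGT (inv_pos.mpr h2m))).exists
  set x := (k : ℝ) / 2 ^ m
  have hx : 2 ^ m * x = k := by simp only [x]; field_simp
  have ht₀ : 0 < 2 ^ m * d := by positivity
  have ht₁ : 2 ^ m * d ≤ 1 := by rwa [← le_div_iff₀' h2m, one_div]
  have hk₁ : (1 : ℝ) ≤ k := by exact_mod_cast hk₀
  have hk₂ : (k : ℝ) + 1 ≤ 2 ^ m := by exact_mod_cast hkm
  have hval : ∀ y : ℝ, |2 ^ m * y - k| ≤ 1 → ∀ j : ℤ, |2 ^ m * y - 2 * j| ≤ 1 →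
      f y = |2 ^ m * y - 2 * j| := fun y hy j hj => by
    obtain ⟨hy₁, hy₂⟩ := abs_le.mp hy
    have hyI : y ∈ Icc 0 1 := ⟨by nlinarith, by nlinarith⟩
    rw [hfm hyI, tent_iterate_eq_abs m j hyI hj]
  have hl : 2 ^ m * (x - d) = k - 2 ^ m * d := by rw [mul_sub, hx]
  have hr : 2 ^ m * (x + d) = k + 2 ^ m * d := by rw [mul_add, hx]
  have hlk : |2 ^ m * (x - d) - k| ≤ 1 := by rw [hl, abs_le]; constructor <;> linarith
  have hrk : |2 ^ m * (x + d) - k| ≤ 1 := by rw [hr, abs_le]; constructor <;> linarith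
  -- `g_m` has a strict local minimum `0` at `k / 2^m` for even `k`, a strict maximum `1`
  -- for odd `k`.
  obtain ⟨j, hj | hj⟩ := Nat.even_or_odd' k
  · have hkj : (k : ℝ) = 2 * (j : ℤ) := by rw [hj]; push_cast; ring
    have e₀ : f x = 0 := by rw [hval x (by simp [hx]) j (by simp [hx, hkj]), hx, hkj]; simp
    have e₁ : f (x - d) = 2 ^ m * d := by
      rw [hval _ hlk j (by rw [hl, hkj, abs_le]; constructor <;> linarith), hl, hkj,
        abs_of_nonpos (by linarith)]
      ring
    have e₂ : f (x + d) = 2 ^ m * d := by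
      rw [hval _ hrk j (by rw [hr, hkj, abs_le]; constructor <;> linarith), hr, hkj,
        abs_of_nonneg (by linarith)]
      ring
    linarith
  · have hkj : (k : ℝ) = 2 * (j : ℤ) + 1 := by rw [hj]; push_cast; ring
    have hkj' : (k : ℝ) = 2 * ((j + 1 : ℤ) : ℝ) - 1 := by rw [hkj]; push_cast; ring
    have e₀ : f x = 1 := by rw [hval x (by simp [hx]) j (by simp [hx, hkj]), hx, hkj]; simp
    have e₁ : f (x - d) = 1 - 2 ^ m * d := by
      rw [hval _ hlk j (by rw [hl, hkj, abs_le]; constructor <;> linarith), hl, hkj,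
        abs_of_nonneg (by linarith)]
      ring
    have e₂ : f (x + d) = 1 - 2 ^ m * d := by
      rw [hval _ hrk (j + 1) (by rw [hr, hkj', abs_le]; constructor <;> linarith), hr, hkj',
        abs_of_nonpos (by linarith)]
      ring
    linarith

theorem two_pow_le_card_add_one {m : ℕ} (hf : PiecewiseAffine s f)
    (hfm : EqOn f tent^[m] (Icc 0 1)) : 2 ^ m ≤ s.card + 1 := by
  have hsub : (Finset.Ico 1 (2 ^ m)).image (fun k : ℕ => (k : ℝ) / 2 ^ m) ⊆ s := by
    intro x hx
    obtain ⟨k, hk, rfl⟩ := Finset.mem_image.mp hx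
    rw [Finset.mem_Ico] at hk
    exact hf.dyadic_mem_of_eqOn_tent_iterate hfm hk.1 hk.2
  have hinj : InjOn (fun k : ℕ => (k : ℝ) / 2 ^ m) (Finset.Ico 1 (2 ^ m)) := fun i _ j _ hij => by
    exact_mod_cast (div_left_inj' (by positivity : (2 : ℝ) ^ m ≠ 0)).mp hij
  have hcard := Finset.card_le_card hsub
  rw [Finset.card_image_of_injOn hinj, Nat.card_Ico] at hcard
  have := Nat.one_le_two_pow (n := m)
  omega

end PiecewiseAffine

theorem exists_width_two_reluHidden_eq_tent_iterate (n : ℕ) :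
    ∃ (w : ℕ → ℕ) (c : Fin (w 0) → ℝ) (A : ∀ ℓ, Fin (w (ℓ + 1)) → Fin (w ℓ) → ℝ)
      (b : ∀ ℓ, Fin (w ℓ) → ℝ) (v : Fin (w n) → ℝ) (v0 : ℝ),
      (∀ ℓ, w ℓ ≤ 2) ∧ ∀ x ∈ Icc (0 : ℝ) 1,
        (∑ j, v j * reluHidden w c A b n x j) + v0 = tent^[n + 1] x := by
  refine ⟨fun _ => 2, ![1, 1], fun _ _ => ![2, -4], fun _ => ![0, -(1 / 2)], ![2, -4], 0,
    fun _ => le_rfl, fun x hx => ?_⟩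
  set H := reluHidden (fun _ => 2) ![1, 1] (fun _ _ => ![2, -4]) (fun _ => ![0, -(1 / 2)])
  have hstep : ∀ ℓ i, H (ℓ + 1) x i = max ((∑ j, ![2, -4] j * H ℓ x j) + ![0, -(1 / 2)] i) 0 :=
    fun _ _ => rfl
  have hread : ∀ y : ℝ, ∑ j, ![2, -4] j * ![y, max (y - 1 / 2) 0] j = tent y := fun y => by
    simp [Fin.sum_univ_two, tent_eq_two_mul_sub]
    ring
  have hlayer : ∀ ℓ, H ℓ x = ![tent^[ℓ] x, max (tent^[ℓ] x - 1 / 2) 0] := by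
    intro ℓ
    induction ℓ with
    | zero =>
      funext i
      fin_cases i <;> simp [H, reluHidden, hx.1, sub_eq_add_neg]
    | succ ℓ ih =>
      funext i
      rw [hstep, ih, hread, ← Function.iterate_succ_apply' tent]
      fin_cases i
      · simpa using (tent_mapsTo.iterate (ℓ + 1) hx).1
      · simp [sub_eq_add_neg]
  rw [hlayer, hread, add_zero, Function.iterate_succ_apply']

theorem half_mul_rpow_le_sum_of_two_pow_le_prod {K L N : ℕ} (w : ℕ → ℕ) (hK : 1 ≤ K)
    (hN : 0 < N) (hNL : N ≤ L) (h : 2 ^ (K * L) ≤ ∏ i ∈ Finset.range N, (w i + 1)) :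
    1 / 2 * N * (K : ℝ) ^ ((L : ℝ) / N) ≤ ∑ i ∈ Finset.range N, (w i : ℝ) := by
  have hN' : (0 : ℝ) < N := by exact_mod_cast hN
  set E : ℝ := K * L / N
  have hE : 1 ≤ E := by
    rw [le_div_iff₀ hN', one_mul]
    exact_mod_cast hNL.trans (Nat.le_mul_of_pos_left L hK)
  have hprod : (2 : ℝ) ^ E ≤ (∏ i ∈ Finset.range N, ((w i : ℝ) + 1)) ^ (N : ℝ)⁻¹ :=
    calc (2 : ℝ) ^ E = ((2 : ℝ) ^ (K * L)) ^ (N : ℝ)⁻¹ := by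
          rw [← Real.rpow_natCast, ← Real.rpow_mul zero_le_two]
          push_cast
          rfl
      _ ≤ _ := Real.rpow_le_rpow (by positivity) (by exact_mod_cast h) (by positivity)
  have hamgm := Real.geom_mean_le_arith_mean (Finset.range N) (fun _ => 1)
    (fun i => (w i : ℝ) + 1) (by simp) (by simpa using hN) (fun i _ => by positivity)
  simp only [Real.rpow_one, one_mul, Finset.sum_const, Finset.card_range, nsmul_eq_mul, mul_one,
    Finset.sum_add_distrib] at hamgm
  rw [le_div_iff₀ hN'] at hamgm
  have hKE : (K : ℝ) ^ ((L : ℝ) / N) ≤ 2 ^ E :=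
    calc (K : ℝ) ^ ((L : ℝ) / N) ≤ ((2 : ℝ) ^ K) ^ ((L : ℝ) / N) :=
          Real.rpow_le_rpow (by positivity) (by exact_mod_cast K.lt_two_pow_self.le) (by positivity)
      _ = 2 ^ E := by
          rw [← Real.rpow_natCast, ← Real.rpow_mul zero_le_two, ← mul_div_assoc]
  have h2E : 2 ≤ (2 : ℝ) ^ E := by
    simpa using Real.rpow_le_rpow_of_exponent_le one_le_two hE
  nlinarith

/-- Telgarsky-type depth separation: there is an absolute constant `c > 0` such that for
all `L ≥ 1`, `K ≥ 2`, the sawtooth `g_{KL}` (the `K·L`-fold composition of the tent map)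
is representable on `[0,1]` by a ReLU network with `K·L` hidden layers of width `≤ 2`,
while any ReLU network with `L̃ = Lh+1 ≤ L` hidden layers representing `g_{KL}` on
`[0,1]` must have at least `c·L̃·K^{L/L̃}` neurons in total. -/
theorem stmt_19 :
    ∃ c : ℝ, 0 < c ∧ ∀ (L K : ℕ), 1 ≤ L → 2 ≤ K →
      (∃ (w : ℕ → ℕ) (cc : Fin (w 0) → ℝ)
          (A : ∀ ℓ, Fin (w (ℓ + 1)) → Fin (w ℓ) → ℝ) (b : ∀ ℓ, Fin (w ℓ) → ℝ)
          (v : Fin (w (K * L - 1)) → ℝ) (v0 : ℝ),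
        (∀ ℓ, w ℓ ≤ 2) ∧
        ∀ x ∈ Set.Icc (0 : ℝ) 1,
          (∑ j, v j * reluHidden w cc A b (K * L - 1) x j) + v0 = tent^[K * L] x) ∧
      (∀ (Lh : ℕ), Lh + 1 ≤ L →
        ∀ (w : ℕ → ℕ) (cc : Fin (w 0) → ℝ)
          (A : ∀ ℓ, Fin (w (ℓ + 1)) → Fin (w ℓ) → ℝ) (b : ∀ ℓ, Fin (w ℓ) → ℝ)
          (v : Fin (w Lh) → ℝ) (v0 : ℝ),
          (∀ x ∈ Set.Icc (0 : ℝ) 1,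
            (∑ j, v j * reluHidden w cc A b Lh x j) + v0 = tent^[K * L] x) →
          c * (Lh + 1 : ℝ) * (K : ℝ) ^ ((L : ℝ) / (Lh + 1 : ℝ)) ≤
            ∑ ℓ ∈ Finset.range (Lh + 1), (w ℓ : ℝ)) := by
  refine ⟨1 / 2, one_half_pos, fun L K hL hK => ⟨?_, ?_⟩⟩
  · have hKL : K * L - 1 + 1 = K * L := Nat.sub_add_cancel (Nat.mul_pos (by omega) hL)
    simpa only [hKL] using exists_width_two_reluHidden_eq_tent_iterate (K * L - 1)
  · intro Lh hLh w cc A b v v0 hrep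
    obtain ⟨s, hcard, hs⟩ := reluHidden_piecewiseAffine w cc A b Lh
    have hbreak := (PiecewiseAffine.sum_mul_add v v0 hs).two_pow_le_card_add_one
      fun x hx => hrep x hx
    have := half_mul_rpow_le_sum_of_two_pow_le_prod w (by omega) Lh.succ_pos hLh
      (hbreak.trans hcard)
    exact_mod_cast this
end
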